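/- arXiv:2510.23012 — 4 statements merged into one kernel-verified Lean document; each statement's English description precedes it below -/
import Mathlib

section
/- Let n ≥ 1, let x ∈ ℝⁿ, and let s = σ₁(x) be the softmax of x. Then for every p with 1 ≤ p ≤ ∞, the ℓ_p-induced operator norm of the matrix Diag(s) − s sᵀ (the Jacobian of the softmax at x) is at most 1/2. -/
open scoped ENNReal BigOperators

/-- The softmax function with inverse temperature `lam`. -/
noncomputable def softmax {n : ℕ} (lam : ℝ) (x : Fin n → ℝ) : Fin n → ℝ :=
  fun i => Real.exp (lam * x i) / ∑ j, Real.exp (lam * x j)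

/-- The ℓ_p norm on `Fin n → ℝ`, for `p ∈ [1, ∞]`. -/
noncomputable def lpNorm {n : ℕ} (p : ℝ≥0∞) (x : Fin n → ℝ) : ℝ :=
  if p = ⊤ then ⨆ i, |x i| else (∑ i, |x i| ^ p.toReal) ^ (1 / p.toReal)

/-- The ℓ_p-induced operator norm of a matrix. -/
noncomputable def opNorm {n m : ℕ} (p : ℝ≥0∞) (A : Matrix (Fin n) (Fin m) ℝ) : ℝ :=
  ⨆ v : {v : Fin m → ℝ // v ≠ 0}, lpNorm p (A.mulVec v.val) / lpNorm p v.val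

/-- The matrix `Diag(s) - s sᵀ` (Jacobian of softmax with `lam = 1` at a point with value `s`). -/
noncomputable def softmaxJac {n : ℕ} (s : Fin n → ℝ) : Matrix (Fin n) (Fin n) ℝ :=
  Matrix.diagonal s - Matrix.vecMulVec s s

/-- The open (interior of the) probability simplex. -/
def openSimplex (n : ℕ) : Set (Fin n → ℝ) :=
  {u | (∀ i, 0 < u i) ∧ ∑ i, u i = 1}

/-- The (closed) probability simplex. -/
def probSimplex (n : ℕ) : Set (Fin n → ℝ) :=
  {u | (∀ i, 0 ≤ u i) ∧ ∑ i, u i = 1}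

lemma lpNorm_pos {n : ℕ} {p : ℝ≥0∞} (hp : 1 ≤ p) {v : Fin n → ℝ} (hv : v ≠ 0) :
    0 < lpNorm p v := by
  obtain ⟨i, hi⟩ : ∃ i, v i ≠ 0 := by
    by_contra h; push_neg at h; exact hv (funext h)
  have hvi : 0 < |v i| := abs_pos.mpr hi
  haveI : Nonempty (Fin n) := ⟨i⟩
  unfold lpNorm
  split_ifs with h
  · exact lt_of_lt_of_le hvi (le_ciSup (f := fun i => |v i|) (Set.Finite.bddAbove (Set.finite_range _)) i)
  · have hP : 0 < p.toReal := by
      refine ENNReal.toReal_pos ?_ h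
      intro h0; rw [h0] at hp; simp at hp
    apply Real.rpow_pos_of_pos
    refine lt_of_lt_of_le (Real.rpow_pos_of_pos hvi p.toReal) ?_
    exact Finset.single_le_sum (fun j _ => Real.rpow_nonneg (abs_nonneg _) _)
      (Finset.mem_univ i)

lemma schur_bound {n : ℕ} (hn : 1 ≤ n) (A : Matrix (Fin n) (Fin n) ℝ) {K : ℝ} (hK : 0 < K)
    (hrow : ∀ i, ∑ j, |A i j| ≤ K) (hcol : ∀ j, ∑ i, |A i j| ≤ K)
    {p : ℝ≥0∞} (hp : 1 ≤ p) (v : Fin n → ℝ) :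
    lpNorm p (A.mulVec v) ≤ K * lpNorm p v := by
  haveI : Nonempty (Fin n) := Fin.pos_iff_nonempty.mp hn
  have habs : ∀ i, |A.mulVec v i| ≤ ∑ j, |A i j| * |v j| := by
    intro i
    calc |A.mulVec v i| = |∑ j, A i j * v j| := rfl
    _ ≤ ∑ j, |A i j * v j| := Finset.abs_sum_le_sum_abs _ _
    _ = ∑ j, |A i j| * |v j| := by simp [abs_mul]
  unfold lpNorm
  split_ifs with h
  · set M := ⨆ i, |v i| with hM
    have hMnn : 0 ≤ M :=
      le_ciSup_of_le (f := fun k => |v k|) (Set.Finite.bddAbove (Set.finite_range _))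
        (Classical.arbitrary _) (abs_nonneg _)
    refine ciSup_le fun i => ?_
    calc |A.mulVec v i| ≤ ∑ j, |A i j| * |v j| := habs i
    _ ≤ ∑ j, |A i j| * M := by
        refine Finset.sum_le_sum fun j _ => ?_
        exact mul_le_mul_of_nonneg_left
          (le_ciSup (f := fun k => |v k|) (Set.Finite.bddAbove (Set.finite_range _)) j) (abs_nonneg _)
    _ = (∑ j, |A i j|) * M := by rw [← Finset.sum_mul]
    _ ≤ K * M := mul_le_mul_of_nonneg_right (hrow i) hMnn
  · have hP1 : 1 ≤ p.toReal := by
      rw [← ENNReal.toReal_one]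
      exact ENNReal.toReal_mono h hp
    set P := p.toReal with hPdef
    have hP0 : 0 < P := lt_of_lt_of_le one_pos hP1
    have key : ∀ i, |A.mulVec v i| ^ P ≤ K ^ (P - 1) * ∑ j, |A i j| * |v j| ^ P := by
      intro i
      have hSnn : 0 ≤ ∑ j, |A i j| * |v j| ^ P :=
        Finset.sum_nonneg fun j _ =>
          mul_nonneg (abs_nonneg _) (Real.rpow_nonneg (abs_nonneg _) _)
      have h1 : ∑ j, |A i j| * |v j| ≤
          (∑ j, |A i j|) ^ (1 - P⁻¹) * (∑ j, |A i j| * |v j| ^ P) ^ P⁻¹ :=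
        Real.inner_le_weight_mul_Lp_of_nonneg Finset.univ hP1 _ _
          (fun j => abs_nonneg _) (fun j => abs_nonneg _)
      have hinv : P⁻¹ ≤ 1 := by
        rw [inv_le_one_iff₀]; right; exact hP1
      have h2 : (∑ j, |A i j|) ^ (1 - P⁻¹) ≤ K ^ (1 - P⁻¹) := by
        apply Real.rpow_le_rpow (Finset.sum_nonneg fun j _ => abs_nonneg _) (hrow i)
        linarith
      have h3 : |A.mulVec v i| ≤
          K ^ (1 - P⁻¹) * (∑ j, |A i j| * |v j| ^ P) ^ P⁻¹ :=
        le_trans (habs i) (le_trans h1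
          (mul_le_mul_of_nonneg_right h2 (Real.rpow_nonneg hSnn _)))
      calc |A.mulVec v i| ^ P
          ≤ (K ^ (1 - P⁻¹) * (∑ j, |A i j| * |v j| ^ P) ^ P⁻¹) ^ P :=
            Real.rpow_le_rpow (abs_nonneg _) h3 hP0.le
        _ = K ^ (P - 1) * ∑ j, |A i j| * |v j| ^ P := by
            rw [Real.mul_rpow (Real.rpow_nonneg hK.le _) (Real.rpow_nonneg hSnn _),
              ← Real.rpow_mul hK.le, ← Real.rpow_mul hSnn]
            rw [show (1 - P⁻¹) * P = P - 1 by field_simp,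
              show P⁻¹ * P = 1 by field_simp, Real.rpow_one]
    have hsum : ∑ i, |A.mulVec v i| ^ P ≤ K ^ P * ∑ j, |v j| ^ P := by
      calc ∑ i, |A.mulVec v i| ^ P
          ≤ ∑ i, K ^ (P - 1) * ∑ j, |A i j| * |v j| ^ P :=
            Finset.sum_le_sum fun i _ => key i
        _ = K ^ (P - 1) * ∑ j, (∑ i, |A i j|) * |v j| ^ P := by
            rw [← Finset.mul_sum, Finset.sum_comm]
            congr 1
            exact Finset.sum_congr rfl fun j _ => (Finset.sum_mul _ _ _).symm
        _ ≤ K ^ (P - 1) * ∑ j, K * |v j| ^ P := by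
            refine mul_le_mul_of_nonneg_left
              (Finset.sum_le_sum fun j _ => ?_) (Real.rpow_nonneg hK.le _)
            exact mul_le_mul_of_nonneg_right (hcol j) (Real.rpow_nonneg (abs_nonneg _) _)
        _ = K ^ P * ∑ j, |v j| ^ P := by
            rw [← Finset.mul_sum, ← mul_assoc]
            congr 1
            rw [← Real.rpow_add_one hK.ne', sub_add_cancel]
    have hvnn : 0 ≤ ∑ j, |v j| ^ P :=
      Finset.sum_nonneg fun j _ => Real.rpow_nonneg (abs_nonneg _) _
    calc (∑ i, |A.mulVec v i| ^ P) ^ (1 / P)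
        ≤ (K ^ P * ∑ j, |v j| ^ P) ^ (1 / P) := by
          apply Real.rpow_le_rpow
            (Finset.sum_nonneg fun i _ => Real.rpow_nonneg (abs_nonneg _) _) hsum
          positivity
      _ = K * (∑ j, |v j| ^ P) ^ (1 / P) := by
          rw [Real.mul_rpow (Real.rpow_nonneg hK.le _) hvnn,
            ← Real.rpow_mul hK.le, mul_one_div, div_self hP0.ne', Real.rpow_one]

lemma softmaxJac_apply {n : ℕ} (s : Fin n → ℝ) (i j : Fin n) :
    softmaxJac s i j = (if i = j then s i else 0) - s i * s j := by
  simp [softmaxJac, Matrix.diagonal, Matrix.vecMulVec, Matrix.sub_apply]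

lemma softmaxJac_rowsum {n : ℕ} {s : Fin n → ℝ} (h0 : ∀ i, 0 ≤ s i)
    (h1 : ∑ i, s i = 1) (i : Fin n) :
    ∑ j, |softmaxJac s i j| ≤ 1 / 2 := by
  have hsle : s i ≤ 1 := by
    rw [← h1]
    exact Finset.single_le_sum (fun j _ => h0 j) (Finset.mem_univ i)
  have herase : ∑ j ∈ Finset.univ.erase i, s j = 1 - s i := by
    have := Finset.sum_erase_add Finset.univ s (Finset.mem_univ i)
    rw [h1] at this; linarith
  have hsplit : ∑ j, |softmaxJac s i j| =
      (∑ j ∈ Finset.univ.erase i, |softmaxJac s i j|) + |softmaxJac s i i| :=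
    (Finset.sum_erase_add _ _ (Finset.mem_univ i)).symm
  have hdiag : |softmaxJac s i i| = s i * (1 - s i) := by
    rw [softmaxJac_apply, if_pos rfl,
      show s i - s i * s i = s i * (1 - s i) by ring]
    exact abs_of_nonneg (mul_nonneg (h0 i) (by linarith))
  have hoff : ∑ j ∈ Finset.univ.erase i, |softmaxJac s i j| = s i * (1 - s i) := by
    rw [← herase, Finset.mul_sum]
    refine Finset.sum_congr rfl fun j hj => ?_
    have hji : i ≠ j := fun hh => (Finset.mem_erase.mp hj).1 hh.symm
    rw [softmaxJac_apply, if_neg hji]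
    rw [zero_sub, abs_neg]
    exact abs_of_nonneg (mul_nonneg (h0 i) (h0 j))
  rw [hsplit, hdiag, hoff]
  nlinarith [sq_nonneg (2 * s i - 1), h0 i]

lemma softmaxJac_symm {n : ℕ} (s : Fin n → ℝ) (i j : Fin n) :
    softmaxJac s i j = softmaxJac s j i := by
  rw [softmaxJac_apply, softmaxJac_apply]
  by_cases h : i = j
  · subst h; ring
  · rw [if_neg h, if_neg (Ne.symm h)]; ring

/-- The ℓ_p-induced operator norm of the softmax Jacobian matrix
`Diag(s) - s sᵀ` (with `s = σ₁(x)`) is at most 1/2, for every `1 ≤ p ≤ ∞`. -/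
theorem softmax_jacobian_opNorm_le_half {n : ℕ} (hn : 1 ≤ n) (x : Fin n → ℝ)
    (p : ℝ≥0∞) (hp : 1 ≤ p) :
    opNorm p (softmaxJac (softmax 1 x)) ≤ 1 / 2 := by
  haveI : Nonempty (Fin n) := Fin.pos_iff_nonempty.mp hn
  set s := softmax 1 x with hs
  have hT : 0 < ∑ j, Real.exp (1 * x j) :=
    Finset.sum_pos (fun j _ => Real.exp_pos _) Finset.univ_nonempty
  have h0 : ∀ i, 0 ≤ s i := fun i => div_nonneg (Real.exp_pos _).le hT.le
  have h1 : ∑ i, s i = 1 := by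
    simp only [hs, softmax]
    rw [← Finset.sum_div, div_self hT.ne']
  have hrow : ∀ i, ∑ j, |softmaxJac s i j| ≤ 1 / 2 := softmaxJac_rowsum h0 h1
  have hcol : ∀ j, ∑ i, |softmaxJac s i j| ≤ 1 / 2 := by
    intro j
    calc ∑ i, |softmaxJac s i j| = ∑ i, |softmaxJac s j i| := by
          refine Finset.sum_congr rfl fun i _ => ?_
          rw [softmaxJac_symm]
      _ ≤ 1 / 2 := hrow j
  haveI : Nonempty {v : Fin n → ℝ // v ≠ 0} := by
    refine ⟨⟨fun _ => 1, fun h => ?_⟩⟩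
    have := congrFun h (Classical.arbitrary _)
    simp at this
  refine ciSup_le fun w => ?_
  obtain ⟨v, hv⟩ := w
  have hpos := lpNorm_pos hp hv
  rw [div_le_iff₀ hpos]
  exact schur_bound hn _ (by norm_num) hrow hcol hp v
end

section
/- Let n ≥ 1, λ > 0, and 1 ≤ p ≤ ∞. The Lipschitz constant of σ_λ with respect to the ℓ_p norm, defined as sup over x ≠ y of ‖σ_λ(x) − σ_λ(y)‖_p / ‖x − y‖_p, equals λ · sup_{s ∈ Δₙ°} ‖Diag(s) − s sᵀ‖_p, the supremum being taken over the open probability simplex Δₙ°. -/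
open scoped ENNReal BigOperators

/-! The Lipschitz constant of a differentiable map `f` on a real normed space is
`sup_x ‖Df(x)‖`: the mean value inequality gives one inequality, and the fact that the derivative of
an `L`-Lipschitz map has norm at most `L` gives the other. For `σ_λ` on `ℓ_p` the derivative at `x`
is `λ (Diag(s) - s sᵀ)` with `s = σ_λ(x)`, and `σ_λ` maps onto the open simplex
(`σ_λ(log s / λ) = s`), so `sup_x ‖Dσ_λ(x)‖ = λ sup_{s ∈ Δₙ°} ‖Diag(s) - s sᵀ‖_p`. The latter
supremum is finite because `s ↦ ‖Diag(s) - s sᵀ‖_p` is continuous on the compact closed simplex. -/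

open WithLp (toLp ofLp)

section LipschitzConstant

variable {E F : Type*} [NormedAddCommGroup E] [NormedSpace ℝ E] [NormedAddCommGroup F]
  [NormedSpace ℝ F]

theorem ContinuousLinearMap.norm_eq_iSup_ratio (f : E →L[ℝ] F) :
    ‖f‖ = ⨆ v : {v : E // v ≠ 0}, ‖f v‖ / ‖(v : E)‖ := by
  have hbdd : BddAbove (Set.range fun v : {v : E // v ≠ 0} => ‖f v‖ / ‖(v : E)‖) :=
    ⟨‖f‖, Set.forall_mem_range.2 fun v => f.ratio_le_opNorm v⟩
  refine le_antisymm (f.opNorm_le_bound (Real.iSup_nonneg fun _ => by positivity) fun v => ?_)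
    (Real.iSup_le (fun v => f.ratio_le_opNorm v) (norm_nonneg f))
  rcases eq_or_ne v 0 with rfl | hv
  · simp
  · exact (div_le_iff₀ (norm_pos_iff.2 hv)).1 (le_ciSup hbdd ⟨v, hv⟩)

theorem iSup_ratio_eq_iSup_norm_of_hasFDerivAt {f : E → F} {f' : E → E →L[ℝ] F}
    (hf : ∀ x, HasFDerivAt f (f' x) x) (hbdd : BddAbove (Set.range fun x => ‖f' x‖)) :
    ⨆ xy : {xy : E × E // xy.1 ≠ xy.2}, ‖f xy.val.1 - f xy.val.2‖ / ‖xy.val.1 - xy.val.2‖ =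
      ⨆ x, ‖f' x‖ := by
  set K := ⨆ x, ‖f' x‖
  have hK : 0 ≤ K := Real.iSup_nonneg fun x => norm_nonneg _
  have hratio : ∀ xy : {xy : E × E // xy.1 ≠ xy.2},
      ‖f xy.val.1 - f xy.val.2‖ / ‖xy.val.1 - xy.val.2‖ ≤ K := fun xy =>
    div_le_of_le_mul₀ (norm_nonneg _) hK <|
      convex_univ.norm_image_sub_le_of_norm_hasFDerivWithin_le
        (fun z _ => (hf z).hasFDerivWithinAt) (fun z _ => le_ciSup hbdd z) trivial trivial
  refine le_antisymm (Real.iSup_le hratio hK) (Real.iSup_le (fun x => ?_) ?_)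
  · refine (hf x).le_of_lip' (Real.iSup_nonneg fun _ => by positivity) (.of_forall fun y => ?_)
    rcases eq_or_ne y x with rfl | hyx
    · simp
    · exact (div_le_iff₀ (norm_pos_iff.2 (sub_ne_zero.2 hyx))).1
        (le_ciSup ⟨K, Set.forall_mem_range.2 hratio⟩ ⟨(y, x), hyx⟩)
  · exact Real.iSup_nonneg fun _ => by positivity

end LipschitzConstant

section LpSpace

variable (p : ℝ≥0∞) {n m : ℕ}

theorem lpNorm_eq_norm_toLp (hp : p ≠ 0) (x : Fin n → ℝ) : lpNorm p x = ‖toLp p x‖ := by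
  unfold lpNorm
  split_ifs with htop
  · subst htop
    simp [PiLp.norm_eq_ciSup]
  · simp [PiLp.norm_eq_sum (ENNReal.toReal_pos hp htop)]

theorem iSup_lpNorm_ratio_eq_iSup_norm_ratio (hp : p ≠ 0) (g : (Fin n → ℝ) → Fin n → ℝ) :
    ⨆ xy : {xy : (Fin n → ℝ) × (Fin n → ℝ) // xy.1 ≠ xy.2},
        lpNorm p (g xy.val.1 - g xy.val.2) / lpNorm p (xy.val.1 - xy.val.2) =
      ⨆ xy : {xy : WithLp p (Fin n → ℝ) × WithLp p (Fin n → ℝ) // xy.1 ≠ xy.2},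
        ‖toLp p (g (ofLp xy.val.1)) - toLp p (g (ofLp xy.val.2))‖ / ‖xy.val.1 - xy.val.2‖ := by
  rw [← (((WithLp.equiv p _).prodCongr (WithLp.equiv p _)).subtypeEquiv
    (p := fun xy => xy.1 ≠ xy.2) fun _ => (WithLp.equiv p _).injective.ne_iff.symm).iSup_comp]
  simp only [lpNorm_eq_norm_toLp p hp, WithLp.toLp_sub]
  rfl

variable [Fact (1 ≤ p)]

theorem opNorm_eq_norm_toLpLin (A : Matrix (Fin n) (Fin m) ℝ) :
    opNorm p A = ‖(Matrix.toLpLin p p A).toContinuousLinearMap‖ := by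
  have hp : p ≠ 0 := (zero_lt_one.trans_le Fact.out).ne'
  rw [ContinuousLinearMap.norm_eq_iSup_ratio, opNorm,
    ← ((WithLp.equiv p (Fin m → ℝ)).symm.subtypeEquiv (p := (· ≠ 0)) (q := (· ≠ 0))
      fun v => by simp).iSup_comp]
  simp [lpNorm_eq_norm_toLp p hp, Matrix.toLpLin_apply]

theorem hasFDerivAt_toLp_comp_ofLp {ι κ : Type*} [Fintype ι] [DecidableEq ι] [Fintype κ]
    {g : (ι → ℝ) → κ → ℝ} {A : Matrix κ ι ℝ} {x : WithLp p (ι → ℝ)}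
    (hg : HasFDerivAt g (Matrix.toLin' A).toContinuousLinearMap (ofLp x)) :
    HasFDerivAt (fun y => toLp p (g (ofLp y))) (Matrix.toLpLin p p A).toContinuousLinearMap x :=
  ((PiLp.hasFDerivAt_toLp p _).comp x (hg.comp x (PiLp.hasFDerivAt_ofLp p x))).congr_fderiv <| by
    ext; rfl

end LpSpace

section Softmax

variable {n : ℕ}

theorem softmax_mem_openSimplex [Nonempty (Fin n)] (lam : ℝ) (x : Fin n → ℝ) :
    softmax lam x ∈ openSimplex n := by
  have hS : 0 < ∑ j, Real.exp (lam * x j) :=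
    Finset.sum_pos (fun j _ => Real.exp_pos _) Finset.univ_nonempty
  exact ⟨fun i => div_pos (Real.exp_pos _) hS,
    by simp only [softmax, ← Finset.sum_div, div_self hS.ne']⟩

theorem softmax_log_div {lam : ℝ} (hlam : lam ≠ 0) {s : Fin n → ℝ} (hs : s ∈ openSimplex n) :
    softmax lam (fun i => Real.log (s i) / lam) = s := by
  have hexp : ∀ j, Real.exp (lam * (Real.log (s j) / lam)) = s j := fun j => by
    rw [mul_div_cancel₀ _ hlam, Real.exp_log (hs.1 j)]
  funext i
  simp only [softmax, hexp, hs.2, div_one]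

theorem surjective_codRestrict_softmax [Nonempty (Fin n)] {lam : ℝ} (hlam : lam ≠ 0) :
    Function.Surjective ((openSimplex n).codRestrict (softmax lam) (softmax_mem_openSimplex lam)) :=
  fun s => ⟨_, Subtype.ext (softmax_log_div hlam s.2)⟩

theorem hasFDerivAt_softmax (lam : ℝ) (x : Fin n → ℝ) :
    HasFDerivAt (softmax lam)
      (Matrix.toLin' (lam • softmaxJac (softmax lam x))).toContinuousLinearMap x := by
  rw [hasFDerivAt_pi']
  intro i
  have hS : 0 < ∑ j, Real.exp (lam * x j) :=
    Finset.sum_pos (fun j _ => Real.exp_pos _) ⟨i, Finset.mem_univ i⟩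
  have hexp : ∀ j, HasFDerivAt (fun y : Fin n → ℝ => Real.exp (lam * y j))
      (Real.exp (lam * x j) • lam • ContinuousLinearMap.proj j) x := fun j =>
    ((hasFDerivAt_apply j x).const_mul lam).exp
  have hsum := HasFDerivAt.fun_sum (u := Finset.univ) fun j _ => hexp j
  refine ((hexp i).mul ((hasDerivAt_inv hS.ne').comp_hasFDerivAt x hsum)).congr_fderiv ?_
  ext v
  simp only [neg_smul, smul_neg, Function.comp_apply, add_apply,
    neg_apply, smul_apply, sum_apply,
    ContinuousLinearMap.proj_apply, smul_eq_mul, softmaxJac, map_smul, map_sub,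
    ContinuousLinearMap.comp_smulₛₗ, Real.ringHom_apply, ContinuousLinearMap.comp_sub,
    sub_apply, ContinuousLinearMap.comp_apply,
    LinearMap.coe_toContinuousLinearMap', Matrix.toLin'_apply, Matrix.mulVec, dotProduct,
    Matrix.diagonal_apply, softmax, ite_mul, zero_mul, Finset.sum_ite_eq, Finset.mem_univ,
    ↓reduceIte, Matrix.vecMulVec_apply]
  set S := ∑ j, Real.exp (lam * x j)
  have hlin : ∑ j, Real.exp (lam * x j) * (lam * v j) = lam * ∑ j, Real.exp (lam * x j) * v j := by
    rw [Finset.mul_sum]; exact Finset.sum_congr rfl fun j _ => by ring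
  have hquad : ∑ j, Real.exp (lam * x i) / S * (Real.exp (lam * x j) / S) * v j =
      Real.exp (lam * x i) / S ^ 2 * ∑ j, Real.exp (lam * x j) * v j := by
    rw [Finset.mul_sum]; exact Finset.sum_congr rfl fun j _ => by ring
  rw [hlin, hquad]
  field_simp
  ring

theorem bddAbove_norm_toLpLin_softmaxJac (p : ℝ≥0∞) [Fact (1 ≤ p)] :
    BddAbove (Set.range fun s : openSimplex n =>
      ‖(Matrix.toLpLin p p (softmaxJac (s : Fin n → ℝ))).toContinuousLinearMap‖) := by
  set jacNorm := fun s : Fin n → ℝ => ‖(Matrix.toLpLin p p (softmaxJac s)).toContinuousLinearMap‖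
  have hlin := LinearMap.continuous_of_finiteDimensional ((Matrix.toLpLin p p).trans
    (LinearMap.toContinuousLinearMap (E := WithLp p (Fin n → ℝ))
      (F' := WithLp p (Fin n → ℝ)))).toLinearMap
  have hcont : Continuous jacNorm :=
    (hlin.comp (continuous_id.matrix_diagonal.sub
      (continuous_id.matrix_vecMulVec continuous_id))).norm
  have hsub : openSimplex n ⊆ stdSimplex ℝ (Fin n) := fun s hs => ⟨fun i => (hs.1 i).le, hs.2⟩
  exact ((isCompact_stdSimplex ℝ (Fin n)).bddAbove_image hcont.continuousOn).mono
    (Set.range_subset_iff.2 fun s => Set.mem_image_of_mem jacNorm (hsub s.2))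

end Softmax

theorem softmax_lipschitz_constant_eq_sup_general {n : ℕ} (lam : ℝ) (hlam : 0 < lam)
    (p : ℝ≥0∞) (hp : 1 ≤ p) :
    (⨆ xy : {xy : (Fin n → ℝ) × (Fin n → ℝ) // xy.1 ≠ xy.2},
        lpNorm p (softmax lam xy.val.1 - softmax lam xy.val.2) /
          lpNorm p (xy.val.1 - xy.val.2)) =
      lam * ⨆ s : openSimplex n, opNorm p (softmaxJac (s : Fin n → ℝ)) := by
  have : Fact (1 ≤ p) := ⟨hp⟩
  rcases isEmpty_or_nonempty (Fin n) with _ | _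
  · have : IsEmpty {xy : (Fin n → ℝ) × (Fin n → ℝ) // xy.1 ≠ xy.2} :=
      ⟨fun xy => xy.2 (Subsingleton.elim _ _)⟩
    have : IsEmpty (openSimplex n) := ⟨fun s => by simpa using s.2.2⟩
    simp
  set J := fun s : Fin n → ℝ => (Matrix.toLpLin p p (softmaxJac s)).toContinuousLinearMap
  set σ := (openSimplex n).codRestrict (softmax lam) (softmax_mem_openSimplex lam) ∘
    WithLp.ofLp (p := p)
  have hσ : Function.Surjective σ :=
    (surjective_codRestrict_softmax hlam.ne').comp (WithLp.equiv p _).surjective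
  have hderiv : ∀ x, HasFDerivAt (fun y => toLp p (softmax lam (ofLp y))) (lam • J (σ x)) x :=
    fun x => by simpa [J, σ] using hasFDerivAt_toLp_comp_ofLp p (hasFDerivAt_softmax lam (ofLp x))
  have hnorm : ∀ x, ‖lam • J (σ x)‖ = lam * ‖J (σ x)‖ := fun x => by
    rw [norm_smul, Real.norm_of_nonneg hlam.le]
  obtain ⟨C, hC⟩ := bddAbove_norm_toLpLin_softmaxJac (n := n) p
  have hbdd : BddAbove (Set.range fun x => ‖lam • J (σ x)‖) :=
    ⟨lam * C, Set.forall_mem_range.2 fun x => by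
      rw [hnorm]; exact mul_le_mul_of_nonneg_left (hC ⟨σ x, rfl⟩) hlam.le⟩
  rw [iSup_lpNorm_ratio_eq_iSup_norm_ratio p (zero_lt_one.trans_le hp).ne',
    iSup_ratio_eq_iSup_norm_of_hasFDerivAt hderiv hbdd, Real.mul_iSup_of_nonneg hlam.le]
  simp_rw [hnorm, opNorm_eq_norm_toLpLin]
  exact hσ.iSup_comp fun s => lam * ‖J s‖

/-- the Lipschitz constant of softmax in the ℓ_p norm equals
`lam` times the supremum over the open simplex of `‖Diag(s) - s sᵀ‖_p`. -/
theorem softmax_lipschitz_constant_eq_sup {n : ℕ} (hn : 1 ≤ n) (lam : ℝ) (hlam : 0 < lam)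
    (p : ℝ≥0∞) (hp : 1 ≤ p) :
    (⨆ xy : {xy : (Fin n → ℝ) × (Fin n → ℝ) // xy.1 ≠ xy.2},
        lpNorm p (softmax lam xy.val.1 - softmax lam xy.val.2) /
          lpNorm p (xy.val.1 - xy.val.2)) =
      lam * ⨆ s : openSimplex n, opNorm p (softmaxJac (s : Fin n → ℝ)) :=
  softmax_lipschitz_constant_eq_sup_general lam hlam p hp
end

section
/- Let n ≥ 2 and let x = (ln(n−1), 0, 0, …, 0) ∈ ℝⁿ. Then s = σ₁(x) lies in the open probability simplex Δₙ° with first coordinate s₁ = 1/2, and the matrix M(s) = Diag(s) − s sᵀ satisfies ‖M(s)‖₁ = 1/2 and ‖M(s)‖_∞ = 1/2. Consequently, for p = 1 and p = ∞, the supremum over s ∈ Δₙ° of ‖Diag(s) − s sᵀ‖_p equals 1/2 and is attained at an interior point of the simplex. -/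
open scoped ENNReal BigOperators

section AuxLemmas
variable {n : ℕ}

lemma lpNorm_one_eq_sum (x : Fin n → ℝ) : lpNorm 1 x = ∑ i, |x i| := by
  simp [lpNorm, Real.rpow_one]

lemma lpNorm_top_eq_iSup (x : Fin n → ℝ) : lpNorm ⊤ x = ⨆ i, |x i| := by
  simp [lpNorm]

lemma l1_pos {v : Fin n → ℝ} (hv : v ≠ 0) : 0 < ∑ i, |v i| := by
  obtain ⟨j, hj⟩ := Function.ne_iff.mp hv
  exact Finset.sum_pos' (fun i _ => abs_nonneg _)
    ⟨j, Finset.mem_univ j, abs_pos.mpr hj⟩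

lemma linf_bdd (v : Fin n → ℝ) : BddAbove (Set.range fun i => |v i|) :=
  Set.Finite.bddAbove (Set.finite_range _)

lemma le_linf (v : Fin n → ℝ) (j : Fin n) : |v j| ≤ ⨆ i, |v i| :=
  le_ciSup (linf_bdd v) j

lemma linf_pos {v : Fin n → ℝ} (hv : v ≠ 0) : 0 < ⨆ i, |v i| := by
  obtain ⟨j, hj⟩ := Function.ne_iff.mp hv
  exact lt_of_lt_of_le (abs_pos.mpr hj) (le_linf v j)

lemma mulVec_l1_le (A : Matrix (Fin n) (Fin n) ℝ) (C : ℝ)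
    (hub : ∀ j, ∑ i, |A i j| ≤ C) (v : Fin n → ℝ) :
    ∑ i, |A.mulVec v i| ≤ C * ∑ j, |v j| := by
  calc ∑ i, |A.mulVec v i| ≤ ∑ i, ∑ j, |A i j| * |v j| := by
        apply Finset.sum_le_sum
        intro i _
        calc |A.mulVec v i| = |∑ j, A i j * v j| := rfl
          _ ≤ ∑ j, |A i j * v j| := Finset.abs_sum_le_sum_abs _ _
          _ = ∑ j, |A i j| * |v j| := by simp [abs_mul]
    _ = ∑ j, (∑ i, |A i j|) * |v j| := by
        rw [Finset.sum_comm]; simp [Finset.sum_mul]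
    _ ≤ ∑ j, C * |v j| :=
        Finset.sum_le_sum fun j _ => mul_le_mul_of_nonneg_right (hub j) (abs_nonneg _)
    _ = C * ∑ j, |v j| := by rw [Finset.mul_sum]

lemma quot_one_le (A : Matrix (Fin n) (Fin n) ℝ) (C : ℝ)
    (hub : ∀ j, ∑ i, |A i j| ≤ C) :
    ∀ v : {v : Fin n → ℝ // v ≠ 0},
      lpNorm 1 (A.mulVec v.val) / lpNorm 1 v.val ≤ C := by
  rintro ⟨v, hv⟩
  rw [lpNorm_one_eq_sum, lpNorm_one_eq_sum, div_le_iff₀ (l1_pos hv)]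
  exact mulVec_l1_le A C hub v

lemma opNorm_one_le (hn : 0 < n) (A : Matrix (Fin n) (Fin n) ℝ) (C : ℝ)
    (hub : ∀ j, ∑ i, |A i j| ≤ C) : opNorm 1 A ≤ C := by
  haveI : Nonempty {v : Fin n → ℝ // v ≠ 0} :=
    ⟨⟨fun _ => 1, fun h => one_ne_zero (congrFun h ⟨0, hn⟩)⟩⟩
  exact ciSup_le (quot_one_le A C hub)

lemma opNorm_one_eq (hn : 0 < n) (A : Matrix (Fin n) (Fin n) ℝ) (C : ℝ)
    (hub : ∀ j, ∑ i, |A i j| ≤ C)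
    (v0 : Fin n → ℝ) (hv0 : v0 ≠ 0)
    (hlow : C * (∑ j, |v0 j|) ≤ ∑ i, |A.mulVec v0 i|) :
    opNorm 1 A = C := by
  haveI : Nonempty {v : Fin n → ℝ // v ≠ 0} := ⟨⟨v0, hv0⟩⟩
  have hbdd : BddAbove (Set.range fun v : {v : Fin n → ℝ // v ≠ 0} =>
      lpNorm 1 (A.mulVec v.val) / lpNorm 1 v.val) := by
    refine ⟨C, ?_⟩
    rintro x ⟨v, rfl⟩
    exact quot_one_le A C hub v
  refine le_antisymm (opNorm_one_le hn A C hub) ?_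
  refine le_trans ?_ (le_ciSup hbdd ⟨v0, hv0⟩)
  rw [lpNorm_one_eq_sum, lpNorm_one_eq_sum, le_div_iff₀ (l1_pos hv0)]
  exact hlow

lemma mulVec_linf_le (hn : 0 < n) (A : Matrix (Fin n) (Fin n) ℝ) (C : ℝ)
    (hub : ∀ i, ∑ j, |A i j| ≤ C) (v : Fin n → ℝ) :
    (⨆ i, |A.mulVec v i|) ≤ C * ⨆ j, |v j| := by
  haveI : Nonempty (Fin n) := Fin.pos_iff_nonempty.mp hn
  apply ciSup_le
  intro i
  calc |A.mulVec v i| = |∑ j, A i j * v j| := rfl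
    _ ≤ ∑ j, |A i j * v j| := Finset.abs_sum_le_sum_abs _ _
    _ = ∑ j, |A i j| * |v j| := by simp [abs_mul]
    _ ≤ ∑ j, |A i j| * ⨆ k, |v k| :=
        Finset.sum_le_sum fun j _ =>
          mul_le_mul_of_nonneg_left (le_linf v j) (abs_nonneg _)
    _ = (∑ j, |A i j|) * ⨆ k, |v k| := by rw [Finset.sum_mul]
    _ ≤ C * ⨆ k, |v k| := by
        apply mul_le_mul_of_nonneg_right (hub i)
        exact le_trans (abs_nonneg _) (le_linf v (Classical.arbitrary _))

lemma quot_top_le (hn : 0 < n) (A : Matrix (Fin n) (Fin n) ℝ) (C : ℝ)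
    (hub : ∀ i, ∑ j, |A i j| ≤ C) :
    ∀ v : {v : Fin n → ℝ // v ≠ 0},
      lpNorm ⊤ (A.mulVec v.val) / lpNorm ⊤ v.val ≤ C := by
  rintro ⟨v, hv⟩
  rw [lpNorm_top_eq_iSup, lpNorm_top_eq_iSup, div_le_iff₀ (linf_pos hv)]
  exact mulVec_linf_le hn A C hub v

lemma opNorm_top_le (hn : 0 < n) (A : Matrix (Fin n) (Fin n) ℝ) (C : ℝ)
    (hub : ∀ i, ∑ j, |A i j| ≤ C) : opNorm ⊤ A ≤ C := by
  haveI : Nonempty {v : Fin n → ℝ // v ≠ 0} :=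
    ⟨⟨fun _ => 1, fun h => one_ne_zero (congrFun h ⟨0, hn⟩)⟩⟩
  exact ciSup_le (quot_top_le hn A C hub)

lemma opNorm_top_eq (hn : 0 < n) (A : Matrix (Fin n) (Fin n) ℝ) (C : ℝ)
    (hub : ∀ i, ∑ j, |A i j| ≤ C)
    (v0 : Fin n → ℝ) (hv0 : v0 ≠ 0)
    (hlow : C * (⨆ j, |v0 j|) ≤ ⨆ i, |A.mulVec v0 i|) :
    opNorm ⊤ A = C := by
  haveI : Nonempty {v : Fin n → ℝ // v ≠ 0} := ⟨⟨v0, hv0⟩⟩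
  have hbdd : BddAbove (Set.range fun v : {v : Fin n → ℝ // v ≠ 0} =>
      lpNorm ⊤ (A.mulVec v.val) / lpNorm ⊤ v.val) := by
    refine ⟨C, ?_⟩
    rintro x ⟨v, rfl⟩
    exact quot_top_le hn A C hub v
  refine le_antisymm (opNorm_top_le hn A C hub) ?_
  refine le_trans ?_ (le_ciSup hbdd ⟨v0, hv0⟩)
  rw [lpNorm_top_eq_iSup, lpNorm_top_eq_iSup, le_div_iff₀ (linf_pos hv0)]
  exact hlow

lemma jac_apply (u : Fin n → ℝ) (i j : Fin n) :
    softmaxJac u i j = (if i = j then u i else 0) - u i * u j := by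
  simp [softmaxJac, Matrix.sub_apply, Matrix.diagonal_apply, Matrix.vecMulVec_apply]

lemma jac_symm (u : Fin n → ℝ) (i j : Fin n) :
    softmaxJac u i j = softmaxJac u j i := by
  rw [jac_apply, jac_apply]
  by_cases h : i = j <;> simp [h, eq_comm, mul_comm]

lemma colsum_eq (u : Fin n → ℝ) (h0 : ∀ i, 0 ≤ u i) (h1 : ∑ i, u i = 1) (j : Fin n) :
    ∑ i, |softmaxJac u i j| = 2 * u j * (1 - u j) := by
  have huj1 : u j ≤ 1 := by
    rw [← h1]
    exact Finset.single_le_sum (fun i _ => h0 i) (Finset.mem_univ j)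
  rw [← Finset.add_sum_erase _ _ (Finset.mem_univ j)]
  have e1 : |softmaxJac u j j| = u j - u j * u j := by
    rw [jac_apply]
    rw [if_pos rfl, abs_of_nonneg]
    nlinarith [h0 j, huj1]
  have e2 : ∑ i ∈ Finset.univ.erase j, |softmaxJac u i j|
      = ∑ i ∈ Finset.univ.erase j, u i * u j := by
    apply Finset.sum_congr rfl
    intro i hi
    rw [jac_apply, if_neg (Finset.ne_of_mem_erase hi)]
    rw [zero_sub, abs_neg, abs_of_nonneg (mul_nonneg (h0 i) (h0 j))]
  rw [e1, e2, ← Finset.sum_mul, Finset.sum_erase_eq_sub (Finset.mem_univ j), h1]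
  ring

lemma colsum_le (u : Fin n → ℝ) (h0 : ∀ i, 0 ≤ u i) (h1 : ∑ i, u i = 1) (j : Fin n) :
    ∑ i, |softmaxJac u i j| ≤ 1 / 2 := by
  rw [colsum_eq u h0 h1 j]
  nlinarith [sq_nonneg (u j - 1/2)]

lemma rowsum_eq_colsum (u : Fin n → ℝ) (i : Fin n) :
    ∑ j, |softmaxJac u i j| = ∑ j, |softmaxJac u j i| := by
  exact Finset.sum_congr rfl fun j _ => by rw [jac_symm]

lemma rowsum_le (u : Fin n → ℝ) (h0 : ∀ i, 0 ≤ u i) (h1 : ∑ i, u i = 1) (i : Fin n) :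
    ∑ j, |softmaxJac u i j| ≤ 1 / 2 := by
  rw [rowsum_eq_colsum]
  exact colsum_le u h0 h1 i

end AuxLemmas

/-- for `x = (ln(n-1), 0, …, 0)`, `s = σ₁(x)` is interior with `s₁ = 1/2` and
`‖M(s)‖₁ = ‖M(s)‖_∞ = 1/2`; hence the supremum over the open simplex is 1/2 for p = 1, ∞,
attained at an interior point. -/
theorem sup_attained_p_one_infty {n : ℕ} (hn : 2 ≤ n) :
    let x : Fin n → ℝ := fun i => if i.val = 0 then Real.log ((n : ℝ) - 1) else 0
    let s := softmax 1 x
    s ∈ openSimplex n ∧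
    s ⟨0, by omega⟩ = 1 / 2 ∧
    opNorm 1 (softmaxJac s) = 1 / 2 ∧
    opNorm ⊤ (softmaxJac s) = 1 / 2 ∧
    (⨆ u : openSimplex n, opNorm 1 (softmaxJac (u : Fin n → ℝ))) = 1 / 2 ∧
    (⨆ u : openSimplex n, opNorm ⊤ (softmaxJac (u : Fin n → ℝ))) = 1 / 2 := by
  intro x s
  have hn0 : 0 < n := by omega
  haveI : Nonempty (Fin n) := Fin.pos_iff_nonempty.mp hn0
  set i0 : Fin n := ⟨0, by omega⟩ with hi0def
  have hn1 : (0:ℝ) < (n:ℝ) - 1 := by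
    have : (2:ℝ) ≤ (n:ℝ) := by exact_mod_cast hn
    linarith
  have hexp : ∀ j : Fin n, Real.exp (1 * x j) = if j = i0 then (n:ℝ) - 1 else 1 := by
    intro j
    show Real.exp (1 * (if j.val = 0 then Real.log ((n : ℝ) - 1) else 0)) = _
    by_cases h : j = i0
    · rw [if_pos h, h, if_pos rfl, one_mul, Real.exp_log hn1]
    · rw [if_neg h, if_neg (fun hv => h (Fin.ext hv)), mul_zero, Real.exp_zero]
  have hD : ∑ j, Real.exp (1 * x j) = 2 * ((n:ℝ) - 1) := by
    rw [Finset.sum_congr rfl (fun j _ => hexp j)]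
    rw [← Finset.add_sum_erase _ _ (Finset.mem_univ i0), if_pos rfl]
    have h1 : ∑ j ∈ Finset.univ.erase i0, (if j = i0 then ((n:ℝ)-1) else 1)
        = (n:ℝ) - 1 := by
      rw [Finset.sum_congr rfl (fun j hj => if_neg (Finset.ne_of_mem_erase hj))]
      rw [Finset.sum_const, Finset.card_erase_of_mem (Finset.mem_univ i0),
        Finset.card_univ, Fintype.card_fin, nsmul_eq_mul, mul_one,
        Nat.cast_sub (by omega : 1 ≤ n), Nat.cast_one]
    rw [h1]; ring
  have hDpos : (0:ℝ) < 2 * ((n:ℝ) - 1) := by linarith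
  have hs_def : ∀ i, s i = Real.exp (1 * x i) / (2 * ((n:ℝ) - 1)) := by
    intro i
    show Real.exp (1 * x i) / (∑ j, Real.exp (1 * x j)) = _
    rw [hD]
  have hspos : ∀ i, 0 < s i := fun i => by
    rw [hs_def]; exact div_pos (Real.exp_pos _) hDpos
  have hsum : ∑ i, s i = 1 := by
    rw [Finset.sum_congr rfl (fun i _ => hs_def i), ← Finset.sum_div, hD,
      div_self (ne_of_gt hDpos)]
  have hsnn : ∀ i, 0 ≤ s i := fun i => (hspos i).le
  have hmem : s ∈ openSimplex n := ⟨hspos, hsum⟩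
  have hs0 : s i0 = 1 / 2 := by
    rw [hs_def, hexp, if_pos rfl]
    rw [div_eq_iff (ne_of_gt hDpos)]
    ring
  -- column sum at i0 equals 1/2
  have hcol0 : ∑ i, |softmaxJac s i i0| = 1 / 2 := by
    rw [colsum_eq s hsnn hsum i0, hs0]; norm_num
  -- p = 1 norm
  have hone : opNorm 1 (softmaxJac s) = 1 / 2 := by
    apply opNorm_one_eq hn0 _ _ (colsum_le s hsnn hsum) (Pi.single i0 1)
    · intro h
      have := congrFun h i0
      rw [Pi.single_eq_same] at this
      exact one_ne_zero this
    · have h1 : ∑ j, |Pi.single i0 (1:ℝ) j| = 1 := by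
        simp [Pi.single_apply, apply_ite abs]
      have h2 : ∑ i, |(softmaxJac s).mulVec (Pi.single i0 1) i| = 1 / 2 := by
        rw [Matrix.mulVec_single]
        simpa using hcol0
      rw [h1, h2, mul_one]
  -- p = ⊤ norm
  have htop : opNorm ⊤ (softmaxJac s) = 1 / 2 := by
    set v2 : Fin n → ℝ := fun j => if j = i0 then (1:ℝ) else -1 with hv2def
    have habs : ∀ j, |v2 j| = 1 := by
      intro j
      by_cases h : j = i0 <;> simp [hv2def, h]
    have hsup : (⨆ j, |v2 j|) = 1 :=
      le_antisymm (ciSup_le fun j => (habs j).le)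
        ((habs i0).symm.le.trans (le_linf v2 i0))
    apply opNorm_top_eq hn0 _ _ (rowsum_le s hsnn hsum) v2
    · intro h
      have := congrFun h i0
      simp [hv2def] at this
    · have hrow : (softmaxJac s).mulVec v2 i0 = ∑ j, |softmaxJac s i0 j| := by
        show ∑ j, softmaxJac s i0 j * v2 j = _
        apply Finset.sum_congr rfl
        intro j _
        by_cases h : j = i0
        · rw [h]
          have hv2i0 : v2 i0 = 1 := by simp [hv2def]
          rw [hv2i0, mul_one, jac_apply, if_pos rfl, abs_of_nonneg]
          nlinarith [hspos i0, hs0]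
        · rw [hv2def]
          simp only [if_neg h, mul_neg_one]
          rw [jac_apply, if_neg (fun hh => h hh.symm), zero_sub, abs_neg,
            abs_of_nonneg (mul_nonneg (hsnn i0) (hsnn j))]
          ring
      have hrowval : ∑ j, |softmaxJac s i0 j| = 1 / 2 := by
        rw [rowsum_eq_colsum]; exact hcol0
      rw [hsup, mul_one]
      calc (1:ℝ)/2 = |(1:ℝ)/2| := (abs_of_nonneg (by norm_num)).symm
        _ = |(softmaxJac s).mulVec v2 i0| := by rw [hrow, hrowval]
        _ ≤ ⨆ i, |(softmaxJac s).mulVec v2 i| := le_linf _ i0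
  -- suprema over the open simplex
  haveI : Nonempty (openSimplex n) := ⟨⟨s, hmem⟩⟩
  have hub1 : ∀ u : openSimplex n, opNorm 1 (softmaxJac (u : Fin n → ℝ)) ≤ 1/2 :=
    fun u => opNorm_one_le hn0 _ _
      (colsum_le u.1 (fun i => (u.2.1 i).le) u.2.2)
  have hubT : ∀ u : openSimplex n, opNorm ⊤ (softmaxJac (u : Fin n → ℝ)) ≤ 1/2 :=
    fun u => opNorm_top_le hn0 _ _
      (rowsum_le u.1 (fun i => (u.2.1 i).le) u.2.2)
  have hsup1 : (⨆ u : openSimplex n, opNorm 1 (softmaxJac (u : Fin n → ℝ))) = 1/2 := by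
    refine le_antisymm (ciSup_le hub1) ?_
    have hb : BddAbove (Set.range fun u : openSimplex n =>
        opNorm 1 (softmaxJac (u : Fin n → ℝ))) := by
      refine ⟨1/2, ?_⟩
      rintro y ⟨u, rfl⟩
      exact hub1 u
    have := le_ciSup hb (⟨s, hmem⟩ : openSimplex n)
    rw [hone] at this
    exact this
  have hsupT : (⨆ u : openSimplex n, opNorm ⊤ (softmaxJac (u : Fin n → ℝ))) = 1/2 := by
    refine le_antisymm (ciSup_le hubT) ?_
    have hb : BddAbove (Set.range fun u : openSimplex n =>
        opNorm ⊤ (softmaxJac (u : Fin n → ℝ))) := by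
      refine ⟨1/2, ?_⟩
      rintro y ⟨u, rfl⟩
      exact hubT u
    have := le_ciSup hb (⟨s, hmem⟩ : openSimplex n)
    rw [htop] at this
    exact this
  exact ⟨hmem, hs0, hone, htop, hsup1, hsupT⟩
end

section
/- Let n ≥ 1 and λ > 0. For all x, y ∈ ℝⁿ, the softmax map satisfies the co-coercivity inequality ⟨σ_λ(x) − σ_λ(y), x − y⟩ ≥ (2/λ) ‖σ_λ(x) − σ_λ(y)‖₂², where ⟨·,·⟩ is the Euclidean inner product. -/
open scoped ENNReal BigOperators

/-!
Softmax is the gradient of log-sum-exp, `logSumExp x = log ∑ exp xᵢ`. Along a line `t ↦ u + t • b`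
the second derivative of `logSumExp` is the variance of `b` under the probability vector
`softmax 1 (u + t • b)`, which lies between `0` and `(∑ bᵢ²) / 2` by Popoviciu's inequality. So
`logSumExp` is convex and `1/2`-smooth, and for such functions the Baillon–Haddad argument shows
that the gradient is `2`-cocoercive. The inverse temperature `λ` is then absorbed by scaling.
-/

open Finset
open scoped RealInnerProductSpace

section WeightedVariance

variable {ι : Type*} [Fintype ι] {s : ι → ℝ}

noncomputable def weightedVariance (s d : ι → ℝ) : ℝ :=
  ∑ i, s i * d i ^ 2 - (∑ i, s i * d i) ^ 2

theorem weightedVariance_eq_sum_mul_sub_sq (hs : ∑ i, s i = 1) (d : ι → ℝ) (c : ℝ) :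
    weightedVariance s d = ∑ i, s i * (d i - c) ^ 2 - (∑ i, s i * d i - c) ^ 2 := by
  have hc : ∑ i, s i * (d i - c) ^ 2 = ∑ i, s i * d i ^ 2 - 2 * c * ∑ i, s i * d i + c ^ 2 := by
    rw [mul_sum, ← sum_sub_distrib, ← mul_one (c ^ 2), ← hs, mul_sum, ← sum_add_distrib]
    exact sum_congr rfl fun i _ => by ring
  rw [weightedVariance, hc]
  ring

theorem weightedVariance_nonneg (hs : ∑ i, s i = 1) (hs₀ : ∀ i, 0 ≤ s i) (d : ι → ℝ) :
    0 ≤ weightedVariance s d := by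
  rw [weightedVariance_eq_sum_mul_sub_sq hs d (∑ i, s i * d i), sub_self, sq, mul_zero, sub_zero]
  exact sum_nonneg fun i _ => mul_nonneg (hs₀ i) (sq_nonneg _)

theorem weightedVariance_le_sq_of_mem_Icc (hs : ∑ i, s i = 1) (hs₀ : ∀ i, 0 ≤ s i)
    {d : ι → ℝ} {a b : ℝ} (hd : ∀ i, d i ∈ Set.Icc a b) :
    weightedVariance s d ≤ ((b - a) / 2) ^ 2 :=
  calc weightedVariance s d ≤ ∑ i, s i * (d i - (a + b) / 2) ^ 2 := by
        rw [weightedVariance_eq_sum_mul_sub_sq hs d ((a + b) / 2)]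
        exact sub_le_self _ (sq_nonneg _)
    _ ≤ ∑ i, s i * ((b - a) / 2) ^ 2 := by
        refine sum_le_sum fun i _ => mul_le_mul_of_nonneg_left ?_ (hs₀ i)
        obtain ⟨ha, hb⟩ := hd i
        exact sq_le_sq' (by linarith) (by linarith)
    _ = ((b - a) / 2) ^ 2 := by rw [← sum_mul, hs, one_mul]

theorem weightedVariance_le_half_sum_sq [Nonempty ι] (hs : ∑ i, s i = 1) (hs₀ : ∀ i, 0 ≤ s i)
    (d : ι → ℝ) : weightedVariance s d ≤ (∑ i, d i ^ 2) / 2 := by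
  classical
  obtain ⟨A, -, hA⟩ := exists_max_image univ d univ_nonempty
  obtain ⟨B, -, hB⟩ := exists_min_image univ d univ_nonempty
  refine (weightedVariance_le_sq_of_mem_Icc hs hs₀ fun i =>
    ⟨hB i (mem_univ i), hA i (mem_univ i)⟩).trans ?_
  rcases eq_or_ne A B with rfl | hAB
  · rw [sub_self, zero_div, sq, mul_zero]
    exact div_nonneg (sum_nonneg fun i _ => sq_nonneg _) zero_le_two
  · have hpair : d A ^ 2 + d B ^ 2 ≤ ∑ i, d i ^ 2 := by
      rw [← sum_pair (f := fun i => d i ^ 2) hAB]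
      exact sum_le_sum_of_subset_of_nonneg (subset_univ _) fun i _ _ => sq_nonneg _
    nlinarith [sq_nonneg (d A + d B)]

end WeightedVariance

theorem add_deriv_mul_sub_le_of_deriv2_nonneg {f f' f'' : ℝ → ℝ}
    (hf : ∀ t, HasDerivAt f (f' t) t) (hf' : ∀ t, HasDerivAt f' (f'' t) t)
    (hf'' : ∀ t, 0 ≤ f'' t) (a b : ℝ) : f a + f' a * (b - a) ≤ f b := by
  have hconv : ConvexOn ℝ Set.univ f :=
    convexOn_of_hasDerivWithinAt2_nonneg convex_univ
      (continuous_iff_continuousAt.2 fun t => (hf t).continuousAt).continuousOn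
      (fun t _ => (hf t).hasDerivWithinAt) (fun t _ => (hf' t).hasDerivWithinAt)
      (fun t _ => hf'' t)
  rcases lt_trichotomy a b with hab | rfl | hab
  · have h := hconv.le_slope_of_hasDerivAt trivial trivial hab (hf a)
    rw [slope_def_field, le_div_iff₀ (sub_pos.2 hab)] at h
    linarith
  · simp
  · have h := hconv.slope_le_of_hasDerivAt trivial trivial hab (hf a)
    rw [slope_def_field, div_le_iff₀ (sub_pos.2 hab)] at h
    linarith

section TangentBounds

variable {E : Type*} [NormedAddCommGroup E] [InnerProductSpace ℝ E] {f : E → ℝ} {g : E → E}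
  {L : ℝ}

theorem add_inner_add_norm_sq_div_le_of_tangent_bounds (hL : 0 < L)
    (hlow : ∀ u v, f u + ⟪g u, v - u⟫ ≤ f v)
    (hup : ∀ u v, f v ≤ f u + ⟪g u, v - u⟫ + L / 2 * ‖v - u‖ ^ 2) (u v : E) :
    f u + ⟪g u, v - u⟫ + ‖g v - g u‖ ^ 2 / (2 * L) ≤ f v := by
  -- `w` minimises the right-hand side of `hup v`; comparing it with `hlow u w` yields the extra
  -- term `‖g v - g u‖² / (2L)`.
  set w := v - L⁻¹ • (g v - g u)
  have hlow_w := hlow u w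
  have hup_w := hup v w
  have hwu : w - u = (v - u) - L⁻¹ • (g v - g u) := by simp only [w]; abel
  have hwv : w - v = -(L⁻¹ • (g v - g u)) := by simp only [w]; abel
  rw [hwu, inner_sub_right, real_inner_smul_right] at hlow_w
  rw [hwv, inner_neg_right, real_inner_smul_right, norm_neg, norm_smul, mul_pow,
    Real.norm_eq_abs, sq_abs] at hup_w
  have hd : ⟪g v, g v - g u⟫ - ⟪g u, g v - g u⟫ = ‖g v - g u‖ ^ 2 := by
    rw [← inner_sub_left, real_inner_self_eq_norm_sq]
  field_simp at hlow_w hup_w ⊢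
  nlinarith [hd]

theorem norm_sub_sq_le_mul_inner_of_tangent_bounds (hL : 0 < L)
    (hlow : ∀ u v, f u + ⟪g u, v - u⟫ ≤ f v)
    (hup : ∀ u v, f v ≤ f u + ⟪g u, v - u⟫ + L / 2 * ‖v - u‖ ^ 2) (u v : E) :
    ‖g u - g v‖ ^ 2 ≤ L * ⟪g u - g v, u - v⟫ := by
  have huv := add_inner_add_norm_sq_div_le_of_tangent_bounds hL hlow hup u v
  have hvu := add_inner_add_norm_sq_div_le_of_tangent_bounds hL hlow hup v u
  have hinner : ⟪g u - g v, u - v⟫ = -(⟪g u, v - u⟫ + ⟪g v, u - v⟫) := by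
    simp only [inner_sub_left, inner_sub_right]
    ring
  rw [norm_sub_rev (g v)] at huv
  have hsum : 2 * (‖g u - g v‖ ^ 2 / (2 * L)) ≤ -(⟪g u, v - u⟫ + ⟪g v, u - v⟫) := by linarith
  rwa [mul_div_assoc', mul_div_mul_left _ _ two_ne_zero, div_le_iff₀' hL, ← hinner] at hsum

end TangentBounds

section LogSumExp

variable {n : ℕ}

noncomputable def logSumExp (x : Fin n → ℝ) : ℝ := Real.log (∑ i, Real.exp (x i))

theorem sum_exp_pos [NeZero n] (x : Fin n → ℝ) : 0 < ∑ i, Real.exp (x i) :=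
  sum_pos (fun _ _ => Real.exp_pos _) univ_nonempty

theorem softmax_nonneg (lam : ℝ) (x : Fin n → ℝ) (i : Fin n) : 0 ≤ softmax lam x i :=
  div_nonneg (Real.exp_pos _).le (sum_nonneg fun _ _ => (Real.exp_pos _).le)

theorem sum_softmax [NeZero n] (lam : ℝ) (x : Fin n → ℝ) : ∑ i, softmax lam x i = 1 := by
  simp only [softmax]
  rw [← sum_div, div_self (sum_exp_pos _).ne']

theorem softmax_eq_softmax_one_smul (lam : ℝ) (x : Fin n → ℝ) :
    softmax lam x = softmax 1 (lam • x) := by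
  ext i
  simp [softmax]

theorem softmax_one_add_smul_apply (u b : Fin n → ℝ) (t : ℝ) (i : Fin n) :
    softmax 1 (u + t • b) i = Real.exp (u i + t * b i) / ∑ j, Real.exp (u j + t * b j) := by
  simp [softmax]

theorem hasDerivAt_exp_add_mul (a b t : ℝ) :
    HasDerivAt (fun t => Real.exp (a + t * b)) (Real.exp (a + t * b) * b) t :=
  (((hasDerivAt_id t).mul_const b).const_add a).exp.congr_deriv (by simp)

theorem hasDerivAt_sum_exp_add_mul (u b : Fin n → ℝ) (t : ℝ) :
    HasDerivAt (fun t => ∑ j, Real.exp (u j + t * b j))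
      (∑ j, Real.exp (u j + t * b j) * b j) t :=
  HasDerivAt.fun_sum fun j _ => hasDerivAt_exp_add_mul (u j) (b j) t

theorem hasDerivAt_logSumExp_add_smul [NeZero n] (u b : Fin n → ℝ) (t : ℝ) :
    HasDerivAt (fun t => logSumExp (u + t • b)) (∑ i, softmax 1 (u + t • b) i * b i) t := by
  have h := (hasDerivAt_sum_exp_add_mul u b t).log (sum_exp_pos _).ne'
  simp only [logSumExp, softmax_one_add_smul_apply, Pi.add_apply, Pi.smul_apply, smul_eq_mul]
  convert h using 1
  rw [sum_div]
  exact sum_congr rfl fun i _ => by ring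

theorem hasDerivAt_softmax_one_add_smul [NeZero n] (u b : Fin n → ℝ) (t : ℝ) (i : Fin n) :
    HasDerivAt (fun t => softmax 1 (u + t • b) i)
      (softmax 1 (u + t • b) i * (b i - ∑ j, softmax 1 (u + t • b) j * b j)) t := by
  have h := (hasDerivAt_exp_add_mul (u i) (b i) t).div (hasDerivAt_sum_exp_add_mul u b t)
    (sum_exp_pos _).ne'
  simp only [softmax_one_add_smul_apply]
  refine h.congr_deriv ?_
  have hS := (sum_exp_pos fun j => u j + t * b j).ne'
  simp only [div_mul_eq_mul_div, ← sum_div]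
  field_simp

theorem hasDerivAt_sum_softmax_one_add_smul_mul [NeZero n] (u b : Fin n → ℝ) (t : ℝ) :
    HasDerivAt (fun t => ∑ i, softmax 1 (u + t • b) i * b i)
      (weightedVariance (softmax 1 (u + t • b)) b) t := by
  refine (HasDerivAt.fun_sum fun i _ =>
    (hasDerivAt_softmax_one_add_smul u b t i).mul_const (b i)) |>.congr_deriv ?_
  rw [weightedVariance, sq, sum_mul, ← sum_sub_distrib]
  exact sum_congr rfl fun i _ => by ring

theorem logSumExp_add_sum_softmax_mul_sub_le [NeZero n] (u v : Fin n → ℝ) :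
    logSumExp u + ∑ i, softmax 1 u i * (v i - u i) ≤ logSumExp v := by
  have h := add_deriv_mul_sub_le_of_deriv2_nonneg (hasDerivAt_logSumExp_add_smul u (v - u))
    (hasDerivAt_sum_softmax_one_add_smul_mul u (v - u))
    (fun _ => weightedVariance_nonneg (sum_softmax 1 _) (softmax_nonneg 1 _) _) 0 1
  simpa using h

theorem logSumExp_le_add_sum_softmax_mul_sub_add [NeZero n] (u v : Fin n → ℝ) :
    logSumExp v ≤
      logSumExp u + ∑ i, softmax 1 u i * (v i - u i) + (∑ i, (v i - u i) ^ 2) / 4 := by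
  set K := (∑ i, (v i - u i) ^ 2) / 2
  set D := fun t : ℝ => ∑ i, softmax 1 (u + t • (v - u)) i * (v - u) i
  -- `K t² / 2 - logSumExp (u + t • (v - u))` is convex since the variance is at most `K`.
  have hf : ∀ t, HasDerivAt (fun t => K * t ^ 2 / 2 - logSumExp (u + t • (v - u)))
      (K * t - D t) t := fun t =>
    (((hasDerivAt_pow 2 t).const_mul K).div_const 2).sub
      (hasDerivAt_logSumExp_add_smul u (v - u) t) |>.congr_deriv (by ring)
  have hf' : ∀ t, HasDerivAt (fun t => K * t - D t)
      (K - weightedVariance (softmax 1 (u + t • (v - u))) (v - u)) t := fun t =>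
    ((hasDerivAt_id t).const_mul K).sub (hasDerivAt_sum_softmax_one_add_smul_mul u (v - u) t)
      |>.congr_deriv (by rw [mul_one])
  have h := add_deriv_mul_sub_le_of_deriv2_nonneg hf hf' (fun _ => sub_nonneg.2 <|
    weightedVariance_le_half_sum_sq (sum_softmax 1 _) (softmax_nonneg 1 _) _) 0 1
  simp only [ne_eq, OfNat.ofNat_ne_zero, not_false_eq_true, zero_pow, mul_zero, zero_div,
    zero_smul, add_zero, zero_sub, Pi.sub_apply, sub_zero, mul_one, one_pow, one_smul,
    add_sub_cancel, add_neg_le_iff_le_add, D] at h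
  linarith [show K / 2 = (∑ i, (v i - u i) ^ 2) / 4 by ring]

theorem two_mul_sum_sq_softmax_sub_le [NeZero n] (u v : Fin n → ℝ) :
    2 * ∑ i, (softmax 1 u i - softmax 1 v i) ^ 2 ≤
      ∑ i, (softmax 1 u i - softmax 1 v i) * (u i - v i) := by
  have key := norm_sub_sq_le_mul_inner_of_tangent_bounds (E := EuclideanSpace ℝ (Fin n))
    (f := fun z => logSumExp z.ofLp) (g := fun z => WithLp.toLp 2 (softmax 1 z.ofLp))
    one_half_pos
    (fun u v => by
      have h := logSumExp_add_sum_softmax_mul_sub_le u.ofLp v.ofLp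
      simp only [PiLp.inner_apply, RCLike.inner_apply, conj_trivial, WithLp.ofLp_sub,
        Pi.sub_apply, mul_comm] at h ⊢
      exact h)
    (fun u v => by
      have h := logSumExp_le_add_sum_softmax_mul_sub_add u.ofLp v.ofLp
      simp only [PiLp.inner_apply, RCLike.inner_apply, conj_trivial, WithLp.ofLp_sub,
        Pi.sub_apply, EuclideanSpace.real_norm_sq_eq, mul_comm] at h ⊢
      linarith)
    (WithLp.toLp 2 u) (WithLp.toLp 2 v)
  simp only [EuclideanSpace.real_norm_sq_eq, PiLp.inner_apply, RCLike.inner_apply, conj_trivial,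
    PiLp.sub_apply, mul_comm] at key ⊢
  linarith

end LogSumExp

theorem lpNorm_two_sq {n : ℕ} (d : Fin n → ℝ) : lpNorm 2 d ^ 2 = ∑ i, d i ^ 2 := by
  have h : lpNorm 2 d = ‖WithLp.toLp 2 d‖ := by
    rw [lpNorm, if_neg ENNReal.ofNat_ne_top, EuclideanSpace.norm_eq, Real.sqrt_eq_rpow]
    simp
  rw [h, EuclideanSpace.real_norm_sq_eq]

/-- softmax is co-coercive with constant 2/lam in the Euclidean structure. -/
theorem softmax_cocoercive {n : ℕ} (hn : 1 ≤ n) (lam : ℝ) (hlam : 0 < lam)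
    (x y : Fin n → ℝ) :
    (2 / lam) * lpNorm 2 (softmax lam x - softmax lam y) ^ 2 ≤
      ∑ i, (softmax lam x i - softmax lam y i) * (x i - y i) := by
  have : NeZero n := ⟨by omega⟩
  have key := two_mul_sum_sq_softmax_sub_le (lam • x) (lam • y)
  have hscale : ∑ i, (softmax 1 (lam • x) i - softmax 1 (lam • y) i) * ((lam • x) i - (lam • y) i)
      = lam * ∑ i, (softmax 1 (lam • x) i - softmax 1 (lam • y) i) * (x i - y i) := by
    rw [mul_sum]
    exact sum_congr rfl fun i _ => by simp only [Pi.smul_apply, smul_eq_mul]; ring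
  rw [lpNorm_two_sq, softmax_eq_softmax_one_smul lam x, softmax_eq_softmax_one_smul lam y,
    div_mul_eq_mul_div, div_le_iff₀ hlam]
  simp only [Pi.sub_apply]
  linarith
end
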